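/- arXiv:2011.00115 — 6 statements merged into one kernel-verified Lean document; each statement's English description precedes it below -/
import Mathlib

section
/- Let b, ε, ω, s₀ be real numbers with ε > 0 and s₀ > 0, and suppose s₀⁴ + (b²ε² − 2ω²)s₀² + ω⁴ − ε² = 0. Then ((s₀² − ω²)/ε)² + (b s₀)² = 1, and consequently there exists t_d ≥ 0 such that cos(s₀ t_d) = (s₀² − ω²)/ε and sin(s₀ t_d) = b s₀. -/
/-! Writing `x = (s₀² − ω²)/ε` and `y = b s₀`, the quartic is exactly `ε² (x² + y² − 1)`, so
`(x, y)` lies on the unit circle. It is therefore `(cos θ, sin θ)` for some angle `θ`, which may be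
reduced modulo `2π` into `[0, 2π)`; the delay is `t_d = θ / s₀`. -/

open Real

theorem quartic_eq_sq_mul_circle (b ε ω s : ℝ) (hε : ε ≠ 0) :
    s ^ 4 + (b ^ 2 * ε ^ 2 - 2 * ω ^ 2) * s ^ 2 + ω ^ 4 - ε ^ 2 =
      ε ^ 2 * (((s ^ 2 - ω ^ 2) / ε) ^ 2 + (b * s) ^ 2 - 1) := by
  field_simp
  ring

theorem exists_nonneg_cos_sin_eq_of_sq_add_sq_eq_one {x y : ℝ} (h : x ^ 2 + y ^ 2 = 1) :
    ∃ θ, 0 ≤ θ ∧ cos θ = x ∧ sin θ = y := by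
  set z : ℂ := ⟨x, y⟩
  have hz : ‖z‖ = 1 := by
    rw [Complex.norm_def, Complex.normSq_mk, ← sq, ← sq, h, sqrt_one]
  have hz₀ : z ≠ 0 := norm_ne_zero_iff.mp (hz ▸ one_ne_zero)
  refine ⟨toIcoMod two_pi_pos 0 z.arg, (toIcoMod_mem_Ico two_pi_pos 0 z.arg).1, ?_, ?_⟩
  · rw [toIcoMod, zsmul_eq_mul, cos_sub_int_mul_two_pi, Complex.cos_arg hz₀, hz, div_one]
  · rw [toIcoMod, zsmul_eq_mul, sin_sub_int_mul_two_pi, Complex.sin_arg, hz, div_one]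

/-- Let `b, ε, ω, s₀` be real with `ε > 0`, `s₀ > 0` and suppose
`s₀⁴ + (b²ε² − 2ω²)s₀² + ω⁴ − ε² = 0`.  Then `((s₀² − ω²)/ε)² + (b s₀)² = 1`, and
consequently there exists a delay `t_d ≥ 0` with `cos(s₀ t_d) = (s₀² − ω²)/ε` and
`sin(s₀ t_d) = b s₀`. -/
theorem stmt_5 (b ε ω s₀ : ℝ) (hε : 0 < ε) (hs₀ : 0 < s₀)
    (hq : s₀ ^ 4 + (b ^ 2 * ε ^ 2 - 2 * ω ^ 2) * s₀ ^ 2 + ω ^ 4 - ε ^ 2 = 0) :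
    ((s₀ ^ 2 - ω ^ 2) / ε) ^ 2 + (b * s₀) ^ 2 = 1 ∧
    ∃ td : ℝ, 0 ≤ td ∧ Real.cos (s₀ * td) = (s₀ ^ 2 - ω ^ 2) / ε ∧
      Real.sin (s₀ * td) = b * s₀ := by
  have hcircle : ((s₀ ^ 2 - ω ^ 2) / ε) ^ 2 + (b * s₀) ^ 2 = 1 := by
    rw [quartic_eq_sq_mul_circle b ε ω s₀ hε.ne'] at hq
    exact sub_eq_zero.mp ((mul_eq_zero.mp hq).resolve_left (pow_ne_zero 2 hε.ne'))
  obtain ⟨θ, hθ, hcos, hsin⟩ := exists_nonneg_cos_sin_eq_of_sq_add_sq_eq_one hcircle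
  refine ⟨hcircle, θ / s₀, div_nonneg hθ hs₀.le, ?_, ?_⟩ <;> rwa [mul_div_cancel₀ θ hs₀.ne']
end

section
/- Let b, ε, ω, s₀ be real numbers with ε > 0, b ≥ 0, s₀ > 0, s₀² ≥ ω², and suppose s₀⁴ + (b²ε² − 2ω²)s₀² + ω⁴ − ε² = 0. Then b s₀ ≤ 1, and the critical delay t_d* := arcsin(b s₀)/s₀ satisfies cos(s₀ t_d*) = (s₀² − ω²)/ε and sin(s₀ t_d*) = b s₀; consequently λ = i s₀ is a root of the characteristic equation (λ² + b ε λ + ω²) e^{λ t_d*} + ε = 0. -/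
/-! The quartic hypothesis says exactly that `c = (s₀² − ω²)/ε` and `s = b s₀` satisfy
`c² + s² = 1`, with `c ≥ 0` because `s₀² ≥ ω²`.  Hence `|b s₀| ≤ 1` and `θ = arcsin (b s₀)` has
`sin θ = s`, `cos θ = √(1 − s²) = c`.  At `λ = i s₀` the quadratic factor then equals
`−ε (cos θ − i sin θ) = −ε e^{−iθ}`, which cancels against `e^{iθ}` to give `−ε`. -/

theorem Real.cos_arcsin_of_sq_add_sq_eq_one {c s : ℝ} (h : c ^ 2 + s ^ 2 = 1) (hc : 0 ≤ c) :
    Real.cos (Real.arcsin s) = c := by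
  rw [Real.cos_arcsin, show 1 - s ^ 2 = c ^ 2 by linarith, Real.sqrt_sq hc]

theorem abs_le_one_of_sq_add_sq_eq_one {c s : ℝ} (h : c ^ 2 + s ^ 2 = 1) : |s| ≤ 1 :=
  sq_le_one_iff_abs_le_one s |>.mp (by nlinarith [sq_nonneg c])

open Complex in
theorem char_eq_zero_at_I_mul {b ε ω s t : ℝ} (hε : ε ≠ 0)
    (hcos : Real.cos (s * t) = (s ^ 2 - ω ^ 2) / ε) (hsin : Real.sin (s * t) = b * s) :
    ((I * (s : ℂ)) ^ 2 + (b : ℂ) * (ε : ℂ) * (I * (s : ℂ)) + (ω : ℂ) ^ 2) *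
        exp (I * (s : ℂ) * (t : ℂ)) + (ε : ℂ) = 0 := by
  set c := Real.cos (s * t)
  set σ := Real.sin (s * t)
  have hexp : exp (I * (s : ℂ) * (t : ℂ)) = (c : ℂ) + (σ : ℂ) * I := by
    rw [show I * (s : ℂ) * (t : ℂ) = ((s * t : ℝ) : ℂ) * I by push_cast; ring, exp_mul_I,
      ← ofReal_cos, ← ofReal_sin]
  have hc : (ε : ℂ) * c = s ^ 2 - ω ^ 2 := by
    rw [hcos]; push_cast; exact mul_div_cancel₀ _ (ofReal_ne_zero.mpr hε)
  have hσ : (σ : ℂ) = b * s := by rw [hsin]; push_cast; ring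
  have hpyth : (c : ℂ) ^ 2 + (σ : ℂ) ^ 2 = 1 := by
    exact_mod_cast Real.cos_sq_add_sin_sq (s * t)
  rw [hexp]
  linear_combination (-(ε : ℂ)) * hpyth + (ε : ℂ) * (σ : ℂ) ^ 2 * I_sq
    + ((c : ℂ) + (σ : ℂ) * I) * (hc - I * (ε : ℂ) * hσ + (s : ℂ) ^ 2 * I_sq)

theorem stmt_6_general (b ε ω s₀ : ℝ) (hε : 0 < ε) (hs₀ : 0 < s₀)
    (hsω : s₀ ^ 2 ≥ ω ^ 2)
    (hq : s₀ ^ 4 + (b ^ 2 * ε ^ 2 - 2 * ω ^ 2) * s₀ ^ 2 + ω ^ 4 - ε ^ 2 = 0) :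
    b * s₀ ≤ 1 ∧
    Real.cos (s₀ * (Real.arcsin (b * s₀) / s₀)) = (s₀ ^ 2 - ω ^ 2) / ε ∧
    Real.sin (s₀ * (Real.arcsin (b * s₀) / s₀)) = b * s₀ ∧
    ((Complex.I * (s₀ : ℂ)) ^ 2 + (b : ℂ) * (ε : ℂ) * (Complex.I * (s₀ : ℂ)) + (ω : ℂ) ^ 2) *
        Complex.exp (Complex.I * (s₀ : ℂ) * ((Real.arcsin (b * s₀) / s₀ : ℝ) : ℂ)) + (ε : ℂ)
      = 0 := by
  have hunit : ((s₀ ^ 2 - ω ^ 2) / ε) ^ 2 + (b * s₀) ^ 2 = 1 := by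
    field_simp
    linear_combination hq
  have habs := abs_le_one_of_sq_add_sq_eq_one hunit
  have hθ : s₀ * (Real.arcsin (b * s₀) / s₀) = Real.arcsin (b * s₀) :=
    mul_div_cancel₀ _ hs₀.ne'
  have hcos : Real.cos (s₀ * (Real.arcsin (b * s₀) / s₀)) = (s₀ ^ 2 - ω ^ 2) / ε := by
    rw [hθ]
    exact Real.cos_arcsin_of_sq_add_sq_eq_one hunit (div_nonneg (by linarith) hε.le)
  have hsin : Real.sin (s₀ * (Real.arcsin (b * s₀) / s₀)) = b * s₀ := by
    rw [hθ]
    exact Real.sin_arcsin (abs_le.mp habs).1 (abs_le.mp habs).2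
  exact ⟨(abs_le.mp habs).2, hcos, hsin, char_eq_zero_at_I_mul hε.ne' hcos hsin⟩

/-- Let `b, ε, ω, s₀` be real with `ε > 0`, `b ≥ 0`, `s₀ > 0`, `s₀² ≥ ω²` and suppose
`s₀⁴ + (b²ε² − 2ω²)s₀² + ω⁴ − ε² = 0`.  Then `b s₀ ≤ 1`, and the critical delay
`t_d* = arcsin(b s₀)/s₀` satisfies `cos(s₀ t_d*) = (s₀² − ω²)/ε` and `sin(s₀ t_d*) = b s₀`;
consequently `λ = i s₀` is a root of the characteristic equation
`(λ² + b ε λ + ω²) e^{λ t_d*} + ε = 0`. -/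
theorem stmt_6 (b ε ω s₀ : ℝ) (hε : 0 < ε) (hb : 0 ≤ b) (hs₀ : 0 < s₀)
    (hsω : s₀ ^ 2 ≥ ω ^ 2)
    (hq : s₀ ^ 4 + (b ^ 2 * ε ^ 2 - 2 * ω ^ 2) * s₀ ^ 2 + ω ^ 4 - ε ^ 2 = 0) :
    b * s₀ ≤ 1 ∧
    Real.cos (s₀ * (Real.arcsin (b * s₀) / s₀)) = (s₀ ^ 2 - ω ^ 2) / ε ∧
    Real.sin (s₀ * (Real.arcsin (b * s₀) / s₀)) = b * s₀ ∧
    ((Complex.I * (s₀ : ℂ)) ^ 2 + (b : ℂ) * (ε : ℂ) * (Complex.I * (s₀ : ℂ)) + (ω : ℂ) ^ 2) *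
        Complex.exp (Complex.I * (s₀ : ℂ) * ((Real.arcsin (b * s₀) / s₀ : ℝ) : ℂ)) + (ε : ℂ)
      = 0 :=
  stmt_6_general b ε ω s₀ hε hs₀ hsω hq
end

section
/- Let b, ε, ω, s₀, τ be real numbers with ε ≠ 0 and s₀ ≠ 0. Let λ : ℝ → ℂ be differentiable at τ with λ(τ) = i s₀ and λ'(τ) ≠ 0, and suppose (λ(t)² + b ε λ(t) + ω²) e^{λ(t) t} + ε = 0 for all t in some neighborhood of τ. Then Re(1/λ'(τ)) = (b²ε² + 2(s₀² − ω²)) / (b²ε² s₀² + (s₀² − ω²)²). -/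
/-!
Differentiating the characteristic equation `P(λ(t)) e^{λ(t) t} + ε = 0` along the branch and
dividing by the exponential gives `λ' (P'(λ) + P(λ) τ) = -P(λ) λ` at `t = τ`, where
`P(λ) ≠ 0` because `P(λ) e^{λτ} = -ε`. Hence `1/λ' = -P'(λ)/(P(λ) λ) - τ/λ`, and the delay term
`τ/λ = τ/(i s₀)` is purely imaginary, so only `-P'(i s₀)/(P(i s₀) i s₀)` contributes to the
real part, which is computed explicitly.
-/

open Complex Filter Topology

theorem root_branch_deriv_mul_eq {P : ℂ → ℂ} {P' ε d : ℂ} {f : ℝ → ℂ}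
    {τ : ℝ} (hP : HasDerivAt P P' (f τ)) (hf : HasDerivAt f d τ)
    (hroot : ∀ᶠ t in 𝓝 τ, P (f t) * cexp (f t * (t : ℂ)) + ε = 0) :
    d * (P' + P (f τ) * τ) = -(P (f τ) * f τ) := by
  have hlin : HasDerivAt (fun t : ℝ => f t * (t : ℂ)) (d * τ + f τ) τ := by
    have h := hf.mul (hasDerivAt_id τ).ofReal_comp
    rwa [ofReal_one, mul_one] at h
  have hg : HasDerivAt (fun t : ℝ => P (f t) * cexp (f t * (t : ℂ)) + ε)
      (P' * d * cexp (f τ * τ) + P (f τ) * (cexp (f τ * τ) * (d * τ + f τ))) τ :=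
    ((hP.comp τ hf).mul hlin.cexp).add_const ε
  have hzero := hg.unique ((hasDerivAt_const τ (0 : ℂ)).congr_of_eventuallyEq hroot)
  apply mul_left_cancel₀ (Complex.exp_ne_zero (f τ * τ))
  linear_combination hzero

theorem one_div_eq_of_mul_eq {A B c d τ : ℂ} (hd : d ≠ 0) (hB : B ≠ 0) (hc : c ≠ 0)
    (h : d * (A + B * τ) = -(B * c)) : 1 / d = -A / (B * c) - τ / c := by
  field_simp
  linear_combination h

theorem re_neg_quadratic_deriv_div_at_I_mul (b ε ω s : ℝ) (hs : s ≠ 0) :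
    (-(2 * (I * s) + b * ε) / (((I * s) ^ 2 + b * ε * (I * s) + ω ^ 2) * (I * s))).re =
      (b ^ 2 * ε ^ 2 + 2 * (s ^ 2 - ω ^ 2)) / (b ^ 2 * ε ^ 2 * s ^ 2 + (s ^ 2 - ω ^ 2) ^ 2) := by
  have hN : -(2 * (I * s) + b * ε) = ⟨-(b * ε), -(2 * s)⟩ := by
    apply Complex.ext <;> simp
  have hW : ((I * s) ^ 2 + b * ε * (I * s) + ω ^ 2) * (I * s) =
      ⟨-(b * ε * s ^ 2), s * (ω ^ 2 - s ^ 2)⟩ := by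
    apply Complex.ext <;> simp [pow_two] <;> ring
  rw [hN, hW, div_re, normSq_mk, ← add_div,
    ← mul_div_mul_left (b ^ 2 * ε ^ 2 + 2 * (s ^ 2 - ω ^ 2)) _ (pow_ne_zero 2 hs)]
  congr 1 <;> ring

/-- Transversality formula.  Let `b, ε, ω, s₀, τ` be real with `ε ≠ 0`, `s₀ ≠ 0`.  Let
`f : ℝ → ℂ` be a branch of characteristic roots as a function of the delay, differentiable
at `τ`, with `f τ = i s₀`, `f' τ ≠ 0`, and satisfying the characteristic equation
`(f(t)² + b ε f(t) + ω²) e^{f(t) t} + ε = 0` for all `t` near `τ`.  Then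
`Re(1/f'(τ)) = (b²ε² + 2(s₀² − ω²)) / (b²ε²s₀² + (s₀² − ω²)²)`. -/
theorem stmt_8 (b ε ω s₀ τ : ℝ) (hε : ε ≠ 0) (hs₀ : s₀ ≠ 0) (f : ℝ → ℂ)
    (hdiff : DifferentiableAt ℝ f τ) (hfτ : f τ = Complex.I * (s₀ : ℂ))
    (hderiv : deriv f τ ≠ 0)
    (hroot : ∀ᶠ t in nhds τ,
      ((f t) ^ 2 + (b : ℂ) * (ε : ℂ) * f t + (ω : ℂ) ^ 2) * Complex.exp (f t * (t : ℂ)) +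
        (ε : ℂ) = 0) :
    (1 / deriv f τ).re =
      (b ^ 2 * ε ^ 2 + 2 * (s₀ ^ 2 - ω ^ 2)) /
        (b ^ 2 * ε ^ 2 * s₀ ^ 2 + (s₀ ^ 2 - ω ^ 2) ^ 2) := by
  have hP : HasDerivAt (fun z : ℂ => z ^ 2 + b * ε * z + ω ^ 2) (2 * f τ + b * ε) (f τ) := by
    simpa using ((hasDerivAt_pow 2 (f τ)).add
      ((hasDerivAt_id (f τ)).const_mul (b * ε : ℂ))).add_const (ω ^ 2 : ℂ)
  have hbranch := root_branch_deriv_mul_eq hP hdiff.hasDerivAt hroot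
  have hPτ : f τ ^ 2 + b * ε * f τ + ω ^ 2 ≠ 0 := by
    intro h
    have hτ := hroot.self_of_nhds
    rw [h, zero_mul, zero_add, ofReal_eq_zero] at hτ
    exact hε hτ
  have hfτ0 : f τ ≠ 0 := by simp [hfτ, hs₀]
  have hre : ((τ : ℂ) / (I * s₀)).re = 0 := by simp [div_re]
  rw [one_div_eq_of_mul_eq hderiv hPτ hfτ0 hbranch, sub_re, hfτ, hre, sub_zero]
  exact re_neg_quadratic_deriv_div_at_I_mul b ε ω s₀ hs₀
end

section
/- Let b, ε, ω be real numbers with ε > 0, b > 0, ω > 0, and let τ ≥ 0. Suppose that for every t ∈ [0, τ] and every s ∈ ℝ, (−s² + i b ε s + ω²)(cos(s t) + i sin(s t)) + ε ≠ 0, i.e. the characteristic equation has no purely imaginary root for any delay in [0, τ]. Then every root λ ∈ ℂ of the characteristic equation (λ² + b ε λ + ω²) e^{λ τ} + ε = 0 has Re λ < 0. -/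
/-!
Let `A ⊆ [0, τ]` be the set of delays at which the characteristic equation has a root in the
closed right half plane. Such roots are bounded independently of the delay, so `A` is closed.
By hypothesis these roots lie in the open half plane, and zeros of holomorphic functions persist
under small uniform perturbations (maximum modulus principle applied to `1 / f`), so `A` is also
relatively open. Since `0 ∉ A` (a real quadratic with positive coefficients is Hurwitz stable),
connectedness of `[0, τ]` forces `A = ∅`.
-/

open Complex Metric Set Filter Topology

section HolomorphicZeros

variable {E : Type*} [NormedAddCommGroup E] [NormedSpace ℂ E] [Nontrivial E]

theorem DiffContOnCl.exists_mem_closedBall_eq_zero {f : E → ℂ} {c : E} {r m : ℝ}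
    (hf : DiffContOnCl ℂ f (ball c r)) (hr : 0 < r) (hc : ‖f c‖ < m)
    (hsphere : ∀ z ∈ sphere c r, m ≤ ‖f z‖) :
    ∃ z ∈ closedBall c r, f z = 0 := by
  by_contra! hne
  have hm : 0 < m := (norm_nonneg _).trans_lt hc
  have hfc : 0 < ‖f c‖ := norm_pos_iff.mpr (hne c (mem_closedBall_self hr.le))
  have hinv : DiffContOnCl ℂ (fun z => (f z)⁻¹) (ball c r) :=
    hf.inv fun z hz => hne z (closure_ball_subset_closedBall hz)
  have hle : ‖(f c)⁻¹‖ ≤ m⁻¹ := by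
    refine Complex.norm_le_of_forall_mem_frontier_norm_le isBounded_ball hinv (fun z hz => ?_)
      (subset_closure (mem_ball_self hr))
    rw [frontier_ball c hr.ne'] at hz
    rw [norm_inv]
    exact inv_anti₀ hm (hsphere z hz)
  rw [norm_inv, inv_le_inv₀ hfc hm] at hle
  exact hle.not_gt hc

end HolomorphicZeros

theorem Differentiable.eventually_ne_zero {f : ℂ → ℂ} (hf : Differentiable ℂ f) {a : ℂ}
    (ha : f a ≠ 0) (z₀ : ℂ) : ∀ᶠ z in 𝓝[≠] z₀, f z ≠ 0 := by
  by_contra h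
  simp only [not_eventually, not_not] at h
  exact ha (AnalyticOnNhd.eqOn_zero_of_preconnected_of_frequently_eq_zero
    (fun z _ => hf.analyticAt z) isPreconnected_univ (mem_univ z₀) h (mem_univ a))

/-- Hurwitz's theorem: an isolated zero of a holomorphic family persists. -/
theorem eventually_exists_mem_ball_eq_zero {X : Type*} [TopologicalSpace X] {F : X → ℂ → ℂ}
    (hF : Continuous (Function.uncurry F)) (hdiff : ∀ t, Differentiable ℂ (F t)) {t₀ : X}
    {z₀ : ℂ} (hz₀ : F t₀ z₀ = 0) (hiso : ∀ᶠ z in 𝓝[≠] z₀, F t₀ z ≠ 0) {ρ : ℝ} (hρ : 0 < ρ) :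
    ∀ᶠ t in 𝓝 t₀, ∃ z ∈ ball z₀ ρ, F t z = 0 := by
  obtain ⟨δ, hδ, hne⟩ := Metric.eventually_nhds_iff.mp (eventually_nhdsWithin_iff.mp hiso)
  set r := min (δ / 2) (ρ / 2)
  have hr : 0 < r := lt_min (half_pos hδ) (half_pos hρ)
  obtain ⟨w₀, hw₀, hmin⟩ := (isCompact_sphere z₀ r).exists_isMinOn
    (NormedSpace.sphere_nonempty.mpr hr.le) (hdiff t₀).continuous.norm.continuousOn
  set m := ‖F t₀ w₀‖
  have hm : 0 < m := by
    have hdist : dist w₀ z₀ = r := hw₀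
    refine norm_pos_iff.mpr (hne ?_ ?_)
    · linarith [min_le_left (δ / 2) (ρ / 2)]
    · rintro rfl
      exact hr.ne' (by simpa using hdist.symm)
  have hclose : ∀ᶠ t in 𝓝 t₀, ∀ w ∈ closedBall z₀ r, ‖F t w - F t₀ w‖ < m / 2 := by
    refine (isCompact_closedBall z₀ r).eventually_forall_of_forall_eventually fun w _ => ?_
    have hcont : Continuous fun p : X × ℂ => ‖F p.1 p.2 - F t₀ p.2‖ :=
      (hF.sub ((hdiff t₀).continuous.comp continuous_snd)).norm
    exact hcont.continuousAt.eventually_lt continuousAt_const (by simpa using half_pos hm)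
  filter_upwards [hclose] with t ht
  have hcenter : ‖F t z₀‖ < m / 2 := by
    simpa [hz₀] using ht z₀ (mem_closedBall_self hr.le)
  have hsphere : ∀ w ∈ sphere z₀ r, m / 2 ≤ ‖F t w‖ := fun w hw => by
    have := ht w (sphere_subset_closedBall hw)
    have := norm_sub_norm_le (F t₀ w) (F t w)
    rw [norm_sub_rev] at this
    linarith [isMinOn_iff.mp hmin w hw]
  obtain ⟨z, hz, hFz⟩ :=
    (hdiff t).diffContOnCl.exists_mem_closedBall_eq_zero hr hcenter hsphere
  exact ⟨z, closedBall_subset_ball (min_lt_of_right_lt (half_lt_self hρ)) hz, hFz⟩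

theorem re_neg_of_sq_add_mul_add_eq_zero {p q : ℝ} (hp : 0 < p) (hq : 0 < q) {z : ℂ}
    (hz : z ^ 2 + p * z + q = 0) : z.re < 0 := by
  have hre := congrArg Complex.re hz
  have him := congrArg Complex.im hz
  simp only [sq, add_re, add_im, mul_re, mul_im, ofReal_re, ofReal_im, zero_re, zero_im] at hre him
  by_contra! h
  have him0 : z.im = 0 := by
    have : z.im * (2 * z.re + p) = 0 := by linarith
    exact (mul_eq_zero.mp this).resolve_right (by linarith)
  rw [him0] at hre
  nlinarith

section DelayedOscillator

variable (b ε ω : ℝ)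

noncomputable def delayChar (t : ℝ) (z : ℂ) : ℂ :=
  (z ^ 2 + (b : ℂ) * (ε : ℂ) * z + (ω : ℂ) ^ 2) * Complex.exp (z * (t : ℂ)) + (ε : ℂ)

def unstableDelays : Set ℝ := {t | ∃ z : ℂ, 0 ≤ z.re ∧ delayChar b ε ω t z = 0}

theorem continuous_uncurry_delayChar : Continuous (Function.uncurry (delayChar b ε ω)) := by
  unfold delayChar
  fun_prop

theorem differentiable_delayChar (t : ℝ) : Differentiable ℂ (delayChar b ε ω t) := by
  unfold delayChar
  fun_prop

theorem delayChar_ofReal_mul_I (t s : ℝ) :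
    delayChar b ε ω t (s * I) =
      ((-(s : ℂ) ^ 2) + I * (b : ℂ) * (ε : ℂ) * (s : ℂ) + (ω : ℂ) ^ 2) *
        ((Real.cos (s * t) : ℂ) + I * (Real.sin (s * t) : ℂ)) + (ε : ℂ) := by
  have harg : (s : ℂ) * I * t = ((s * t : ℝ) : ℂ) * I := by push_cast; ring
  rw [delayChar, harg, exp_mul_I, ← ofReal_cos, ← ofReal_sin]
  linear_combination ((s : ℂ) ^ 2 * (Real.cos (s * t) + Real.sin (s * t) * I)) * I_sq

theorem norm_le_of_delayChar_eq_zero {t : ℝ} (ht : 0 ≤ t) {z : ℂ} (hz : 0 ≤ z.re)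
    (hroot : delayChar b ε ω t z = 0) : ‖z‖ ≤ 1 + |ε| + |b * ε| + ω ^ 2 := by
  set P := z ^ 2 + (b : ℂ) * (ε : ℂ) * z + (ω : ℂ) ^ 2
  have hexp : 1 ≤ ‖Complex.exp (z * t)‖ := by
    rw [norm_exp, mul_re, ofReal_re, ofReal_im, mul_zero, sub_zero]
    exact Real.one_le_exp (mul_nonneg hz ht)
  have hP : ‖P‖ ≤ |ε| := by
    have : ‖P‖ * ‖Complex.exp (z * t)‖ = |ε| := by
      rw [← norm_mul, eq_neg_of_add_eq_zero_left hroot, norm_neg, norm_real, Real.norm_eq_abs]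
    nlinarith [norm_nonneg P]
  have hsq : ‖z‖ ^ 2 ≤ |ε| + |b * ε| * ‖z‖ + ω ^ 2 :=
    calc ‖z‖ ^ 2 = ‖P - ((b : ℂ) * (ε : ℂ) * z + (ω : ℂ) ^ 2)‖ := by
          rw [← norm_pow]; congr 1; ring
      _ ≤ ‖P‖ + (‖(b : ℂ) * (ε : ℂ) * z‖ + ‖(ω : ℂ) ^ 2‖) :=
          (norm_sub_le _ _).trans (by gcongr; exact norm_add_le _ _)
      _ ≤ |ε| + |b * ε| * ‖z‖ + ω ^ 2 := by
        rw [norm_mul, ← ofReal_mul, norm_real, Real.norm_eq_abs, norm_pow, norm_real,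
          Real.norm_eq_abs, sq_abs]
        linarith
  nlinarith [norm_nonneg z, abs_nonneg ε, abs_nonneg (b * ε), sq_nonneg ω]

theorem isCompact_unstableDelays_inter_Icc (τ : ℝ) :
    IsCompact (unstableDelays b ε ω ∩ Icc 0 τ) := by
  set K := {z : ℂ | 0 ≤ z.re} ∩ closedBall 0 (1 + |ε| + |b * ε| + ω ^ 2)
  have hK : IsCompact K :=
    (isCompact_closedBall _ _).inter_left (isClosed_le continuous_const continuous_re)
  have hroots : IsCompact (Icc 0 τ ×ˢ K ∩ {p | delayChar b ε ω p.1 p.2 = 0}) :=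
    (isCompact_Icc.prod hK).inter_right
      (isClosed_eq (continuous_uncurry_delayChar b ε ω) continuous_const)
  convert hroots.image continuous_fst using 1
  ext t
  constructor
  · rintro ⟨⟨z, hz, hroot⟩, ht⟩
    refine ⟨(t, z), ⟨⟨ht, hz, ?_⟩, hroot⟩, rfl⟩
    simpa using norm_le_of_delayChar_eq_zero b ε ω ht.1 hz hroot
  · rintro ⟨⟨t, z⟩, ⟨⟨ht, hz, -⟩, hroot⟩, rfl⟩
    exact ⟨⟨z, hz, hroot⟩, ht⟩

theorem zero_notMem_unstableDelays (hbε : 0 < b * ε) (hωε : 0 < ω ^ 2 + ε) :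
    (0 : ℝ) ∉ unstableDelays b ε ω := by
  rintro ⟨z, hz, hroot⟩
  have hquad : z ^ 2 + ((b * ε : ℝ) : ℂ) * z + ((ω ^ 2 + ε : ℝ) : ℂ) = 0 := by
    rw [← hroot]
    simp only [delayChar, ofReal_zero, mul_zero, Complex.exp_zero, mul_one]
    push_cast
    ring
  exact (re_neg_of_sq_add_mul_add_eq_zero hbε hωε hquad).not_ge hz

theorem unstableDelays_mem_nhds (hωε : ω ^ 2 + ε ≠ 0) {t₀ : ℝ}
    (ht₀ : t₀ ∈ unstableDelays b ε ω) (himag : ∀ s : ℝ, delayChar b ε ω t₀ (s * I) ≠ 0) :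
    unstableDelays b ε ω ∈ 𝓝 t₀ := by
  obtain ⟨z₀, hz₀, hroot⟩ := ht₀
  have hpos : 0 < z₀.re := by
    refine hz₀.lt_of_ne fun hre => himag z₀.im ?_
    rwa [← re_add_im z₀, ← hre, ofReal_zero, zero_add] at hroot
  have hiso : ∀ᶠ z in 𝓝[≠] z₀, delayChar b ε ω t₀ z ≠ 0 :=
    (differentiable_delayChar b ε ω t₀).eventually_ne_zero (a := 0)
      (by simpa [delayChar] using mod_cast hωε) z₀
  filter_upwards [eventually_exists_mem_ball_eq_zero (continuous_uncurry_delayChar b ε ω)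
    (differentiable_delayChar b ε ω) hroot hiso hpos] with t ⟨z, hz, hzroot⟩
  refine ⟨z, ?_, hzroot⟩
  have := (abs_re_le_norm (z - z₀)).trans_lt (mem_ball_iff_norm.mp hz)
  rw [sub_re, abs_lt] at this
  linarith

end DelayedOscillator

theorem stmt_10_general (b ε ω τ : ℝ) (hε : 0 < ε) (hb : 0 < b) (hτ : 0 ≤ τ)
    (hno : ∀ t ∈ Set.Icc (0 : ℝ) τ, ∀ s : ℝ,
      ((-(s : ℂ) ^ 2) + Complex.I * (b : ℂ) * (ε : ℂ) * (s : ℂ) + (ω : ℂ) ^ 2) *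
          ((Real.cos (s * t) : ℂ) + Complex.I * (Real.sin (s * t) : ℂ)) + (ε : ℂ) ≠ 0) :
    ∀ z : ℂ, (z ^ 2 + (b : ℂ) * (ε : ℂ) * z + (ω : ℂ) ^ 2) * Complex.exp (z * (τ : ℂ)) +
        (ε : ℂ) = 0 → z.re < 0 := by
  intro z hz
  by_contra! hre
  have : PreconnectedSpace (Icc 0 τ) := Subtype.preconnectedSpace isPreconnected_Icc
  set A : Set (Icc 0 τ) := Subtype.val ⁻¹' unstableDelays b ε ω
  have hclosed : IsClosed A := by
    have := (isCompact_unstableDelays_inter_Icc b ε ω τ).isClosed.preimage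
      (continuous_subtype_val (p := (· ∈ Icc 0 τ)))
    rwa [preimage_inter, Subtype.coe_preimage_self, inter_univ] at this
  have hopen : IsOpen A := isOpen_iff_mem_nhds.mpr fun t ht =>
    continuous_subtype_val.continuousAt.preimage_mem_nhds <|
      unstableDelays_mem_nhds b ε ω (by positivity) ht fun s => by
        rw [delayChar_ofReal_mul_I]; exact hno t t.2 s
  have hA : A = univ := IsClopen.eq_univ ⟨hclosed, hopen⟩ ⟨⟨τ, hτ, le_rfl⟩, z, hre, hz⟩
  have h0 : (⟨0, le_rfl, hτ⟩ : Icc 0 τ) ∈ A := hA ▸ mem_univ _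
  exact zero_notMem_unstableDelays b ε ω (by positivity) (by positivity) h0

/-- Let `b, ε, ω` be real with `ε > 0`, `b > 0`, `ω > 0`, and let `τ ≥ 0`.  If for every delay
`t ∈ [0, τ]` the characteristic equation has no purely imaginary root, i.e.
`(−s² + i b ε s + ω²)(cos(s t) + i sin(s t)) + ε ≠ 0` for all real `s`, then every complex
root `λ` of `(λ² + b ε λ + ω²) e^{λ τ} + ε = 0` has `Re λ < 0`. -/
theorem stmt_10 (b ε ω τ : ℝ) (hε : 0 < ε) (hb : 0 < b) (hω : 0 < ω) (hτ : 0 ≤ τ)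
    (hno : ∀ t ∈ Set.Icc (0 : ℝ) τ, ∀ s : ℝ,
      ((-(s : ℂ) ^ 2) + Complex.I * (b : ℂ) * (ε : ℂ) * (s : ℂ) + (ω : ℂ) ^ 2) *
          ((Real.cos (s * t) : ℂ) + Complex.I * (Real.sin (s * t) : ℂ)) + (ε : ℂ) ≠ 0) :
    ∀ z : ℂ, (z ^ 2 + (b : ℂ) * (ε : ℂ) * z + (ω : ℂ) ^ 2) * Complex.exp (z * (τ : ℂ)) +
        (ε : ℂ) = 0 → z.re < 0 :=
  stmt_10_general b ε ω τ hε hb hτ hno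
end

section
/- Let a, ε, c be real numbers with a > 0, ε > 0, c > 0, and let r : [0, ∞) → ℝ be differentiable with r'(t) = −(ε r(t)/8)(a r(t)² − 4c) for all t ≥ 0 and r(0) > 0. Then r(t) → 2√(c/a) as t → ∞. -/
open Real Set Filter Topology

/-!
Squaring turns the amplitude equation into the logistic equation `u' = k u (K - u)` for
`u = r²`, with `k = εa/4` and `K = 4c/a`. Along the explicit logistic denominator
`d(t) = u(0) + (K - u(0)) e^{-kKt}` the defect `g = u d - K u(0)` satisfies the linear equation
`g' = -k u g` with `g(0) = 0`, so Grönwall forces `g ≡ 0`. Hence `u = K u(0) / d → K`, and `u` never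
vanishes; by connectedness `r` keeps the sign of `r(0) > 0`, so `r = √u → √K = 2√(c/a)`.
-/

theorem eq_zero_of_hasDerivAt_smul_self {E : Type*} [NormedAddCommGroup E] [NormedSpace ℝ E]
    {f : ℝ → E} {q : ℝ → ℝ} {a : ℝ} (hq : ContinuousOn q (Ici a))
    (hf : ∀ t ∈ Ici a, HasDerivAt f (q t • f t) t) (ha : f a = 0) :
    ∀ t ∈ Ici a, f t = 0 := by
  intro T hT
  obtain ⟨M, hM⟩ := isCompact_Icc.exists_bound_of_continuousOn (hq.mono Icc_subset_Ici_self)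
  refine eq_zero_of_abs_deriv_le_mul_abs_self_of_eq_zero_right (K := M)
    (fun t ht => (hf t ht.1).continuousAt.continuousWithinAt)
    (fun t ht => (hf t ht.1).hasDerivWithinAt) ha (fun t ht => ?_) T ⟨hT, le_rfl⟩
  rw [norm_smul]
  exact mul_le_mul_of_nonneg_right (hM t (Ico_subset_Icc_self ht)) (norm_nonneg _)

theorem IsPreconnected.pos_of_forall_ne_zero {X : Type*} [TopologicalSpace X] {s : Set X}
    (hs : IsPreconnected s) {f : X → ℝ} (hf : ContinuousOn f s) {x₀ : X} (hx₀ : x₀ ∈ s)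
    (hne : ∀ x ∈ s, f x ≠ 0) (h₀ : 0 < f x₀) : ∀ x ∈ s, 0 < f x := by
  intro x hx
  by_contra! hfx
  obtain ⟨y, hy, hy0⟩ := hs.intermediate_value hx hx₀ hf ⟨hfx, h₀.le⟩
  exact hne y hy hy0

section Logistic

variable {u : ℝ → ℝ} {k K : ℝ}

theorem mul_logistic_denominator_eq
    (hu : ∀ t ∈ Ici (0 : ℝ), HasDerivAt u (k * u t * (K - u t)) t) :
    ∀ t ∈ Ici (0 : ℝ), u t * (u 0 + (K - u 0) * exp (-(k * K * t))) = K * u 0 := by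
  set d : ℝ → ℝ := fun t => u 0 + (K - u 0) * exp (-(k * K * t))
  have hd : ∀ t, HasDerivAt d (-(k * K) * (d t - u 0)) t := fun t =>
    ((((hasDerivAt_id t).const_mul (k * K)).neg.exp.const_mul (K - u 0)).const_add (u 0)).congr_deriv
      (by simp only [d, id, Pi.neg_apply]; ring)
  have hdefect : ∀ t ∈ Ici (0 : ℝ),
      HasDerivAt (fun t => u t * d t - K * u 0) (-(k * u t) * (u t * d t - K * u 0)) t :=
    fun t ht => (((hu t ht).mul (hd t)).sub_const (K * u 0)).congr_deriv (by ring)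
  have hq : ContinuousOn (fun t => -(k * u t)) (Ici 0) := fun t ht =>
    ((hu t ht).continuousAt.const_mul k).neg.continuousWithinAt
  intro t ht
  refine sub_eq_zero.mp (eq_zero_of_hasDerivAt_smul_self hq hdefect ?_ t ht)
  simp [d, mul_comm]

theorem tendsto_of_hasDerivAt_logistic (hkK : 0 < k * K) (h₀ : u 0 ≠ 0)
    (hu : ∀ t ∈ Ici (0 : ℝ), HasDerivAt u (k * u t * (K - u t)) t) :
    Tendsto u atTop (𝓝 K) := by
  have hdecay : Tendsto (fun t => exp (-(k * K * t))) atTop (𝓝 0) :=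
    tendsto_exp_neg_atTop_nhds_zero.comp (tendsto_id.const_mul_atTop hkK)
  have hd : Tendsto (fun t => u 0 + (K - u 0) * exp (-(k * K * t))) atTop (𝓝 (u 0)) := by
    simpa using tendsto_const_nhds.add (hdecay.const_mul (K - u 0))
  have hquot := (tendsto_const_nhds (x := K * u 0)).div hd h₀
  rw [mul_div_cancel_right₀ K h₀] at hquot
  refine hquot.congr' ?_
  filter_upwards [eventually_ge_atTop 0, hd.eventually_ne h₀] with t ht hdt
  exact (eq_div_of_mul_eq hdt (mul_logistic_denominator_eq hu t ht)).symm

end Logistic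

/-- Let `a, ε, c` be real with `a > 0`, `ε > 0`, `c > 0`, and let `r : ℝ → ℝ` satisfy the
averaged amplitude equation `r'(t) = −(ε r(t)/8)(a r(t)² − 4c)` for all `t ≥ 0` with
`r(0) > 0`.  Then `r(t) → 2√(c/a)` as `t → ∞`. -/
theorem stmt_13 (a ε c : ℝ) (ha : 0 < a) (hε : 0 < ε) (hc : 0 < c) (r : ℝ → ℝ)
    (hr : ∀ t : ℝ, 0 ≤ t → HasDerivAt r (-(ε * r t / 8) * (a * (r t) ^ 2 - 4 * c)) t)
    (h0 : 0 < r 0) :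
    Filter.Tendsto r Filter.atTop (nhds (2 * Real.sqrt (c / a))) := by
  set u : ℝ → ℝ := fun t => r t ^ 2
  have hu : ∀ t ∈ Ici (0 : ℝ), HasDerivAt u (ε * a / 4 * u t * (4 * c / a - u t)) t :=
    fun t ht => ((hr t ht).fun_pow 2).congr_deriv (by simp only [u]; field_simp; ring)
  have hkK : 0 < ε * a / 4 * (4 * c / a) := by positivity
  have hr_ne : ∀ t ∈ Ici (0 : ℝ), r t ≠ 0 := fun t ht hrt => by
    simpa [u, hrt, hc.ne', ha.ne', h0.ne'] using mul_logistic_denominator_eq hu t ht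
  have hr_pos := isPreconnected_Ici.pos_of_forall_ne_zero
    (fun t ht => (hr t ht).continuousAt.continuousWithinAt) self_mem_Ici hr_ne h0
  have hu_lim := tendsto_of_hasDerivAt_logistic hkK (by positivity) hu
  have hsqrt : 2 * sqrt (c / a) = sqrt (4 * c / a) := by
    rw [mul_div_assoc, sqrt_mul zero_le_four, show (4 : ℝ) = 2 ^ 2 by norm_num, sqrt_sq zero_le_two]
  rw [hsqrt]
  refine ((continuous_sqrt.tendsto _).comp hu_lim).congr' ?_
  filter_upwards [eventually_ge_atTop 0] with t ht
  exact sqrt_sq (hr_pos t ht).le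
end

section
/- Fix real numbers a, b, γ, r, ε, φ and ω > 0, and for Ω ∈ ℝ define B₁(Ω) = (a γ r² ω ε/(32π)) · ( −8ω cos(2φ)/(4ω² − Ω²) − 8ω cos(4φ)/(16ω² − Ω²) + 2cos(2(πΩ/ω + φ))/(2ω + Ω) + cos(2πΩ/ω + 4φ)/(4ω + Ω) + 2cos(2φ − 2πΩ/ω)/(2ω − Ω) + cos(4φ − 2πΩ/ω)/(4ω − Ω) ) and B₂(Ω) = [b γ ω ε/(2π(8ω² − 2Ω²))] · ( Ω sin(2φ) sin(2πΩ/ω) − 4ω cos(2φ) sin²(πΩ/ω) ). Then the limit of B₁(Ω) + B₂(Ω) as Ω → 2ω (through values Ω ≠ 2ω in a punctured neighborhood of 2ω) equals −(1/8) γ ε sin(2φ)(a r² + 2b). -/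
/-!
Near `Ω = 2ω` the only singular terms are those with a factor `2ω - Ω` in the denominator. Put
over the common denominator `(2ω - Ω)(2ω + Ω)`, the singular terms of `B₁`, and all of `B₂`,
have numerators vanishing at `Ω = 2ω`, where the phase `2πΩ/ω` is a multiple of `2π`. Each such
quotient is therefore a difference quotient and tends to minus the derivative of its numerator
divided by the regular factor; the remaining terms of `B₁` are continuous at `2ω`.
-/

open Real Filter Topology

theorem tendsto_div_sub_mul_of_hasDerivAt {𝕜 : Type*} [NontriviallyNormedField 𝕜]
    {f k : 𝕜 → 𝕜} {x₀ f' : 𝕜} (hf : HasDerivAt f f' x₀) (hf₀ : f x₀ = 0)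
    (hk : ContinuousAt k x₀) (hk₀ : k x₀ ≠ 0) :
    Tendsto (fun x => f x / ((x₀ - x) * k x)) (𝓝[≠] x₀) (𝓝 (-f' / k x₀)) := by
  have hslope := (hasDerivAt_iff_tendsto_slope.mp hf).neg.div
    (hk.tendsto.mono_left nhdsWithin_le_nhds) hk₀
  refine hslope.congr fun x => ?_
  rw [Pi.div_apply, slope_def_field, hf₀, sub_zero, ← neg_sub x x₀, neg_mul, div_neg, neg_div,
    div_div]

section
variable (φ ω : ℝ)

theorem two_pi_mul_div_at_resonance (hω : ω ≠ 0) : 2 * π * (2 * ω) / ω = (2 : ℕ) * (2 * π) := by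
  field_simp; push_cast; ring

theorem pi_mul_div_at_resonance (hω : ω ≠ 0) : π * (2 * ω) / ω = 2 * π := by
  field_simp

theorem hasDerivAt_B₁_resonant_numerator (hω : ω ≠ 0) :
    HasDerivAt (fun Ω => 2 * (2 * ω + Ω) * cos (2 * φ - 2 * π * Ω / ω) - 8 * ω * cos (2 * φ))
      (2 * cos (2 * φ) + 16 * π * sin (2 * φ)) (2 * ω) := by
  have hphase : HasDerivAt (fun Ω => 2 * φ - 2 * π * Ω / ω) (-(2 * π / ω)) (2 * ω) := by
    simpa using ((hasDerivAt_id' (2 * ω)).const_mul (2 * π)).div_const ω |>.const_sub (2 * φ)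
  refine ((((hasDerivAt_id' (2 * ω)).const_add (2 * ω)).const_mul 2).mul hphase.cos).sub_const
    (8 * ω * cos (2 * φ)) |>.congr_deriv ?_
  rw [two_pi_mul_div_at_resonance ω hω, cos_sub_nat_mul_two_pi, sin_sub_nat_mul_two_pi]
  field_simp
  ring

theorem B₁_resonant_numerator_eq_zero (hω : ω ≠ 0) :
    2 * (2 * ω + 2 * ω) * cos (2 * φ - 2 * π * (2 * ω) / ω) - 8 * ω * cos (2 * φ) = 0 := by
  rw [two_pi_mul_div_at_resonance ω hω, cos_sub_nat_mul_two_pi]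
  ring

theorem hasDerivAt_B₂_resonant_numerator (hω : ω ≠ 0) :
    HasDerivAt (fun Ω => Ω * sin (2 * φ) * sin (2 * π * Ω / ω) -
        4 * ω * cos (2 * φ) * sin (π * Ω / ω) ^ 2)
      (4 * π * sin (2 * φ)) (2 * ω) := by
  have h₁ := ((hasDerivAt_id' (2 * ω)).const_mul (2 * π)).div_const ω
  have h₂ := ((hasDerivAt_id' (2 * ω)).const_mul π).div_const ω
  refine (((hasDerivAt_id' (2 * ω)).mul_const (sin (2 * φ))).mul h₁.sin).sub
    ((h₂.sin.pow 2).const_mul (4 * ω * cos (2 * φ))) |>.congr_deriv ?_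
  rw [two_pi_mul_div_at_resonance ω hω, pi_mul_div_at_resonance ω hω, cos_nat_mul_two_pi,
    sin_periodic.nat_mul_eq, sin_zero, sin_two_pi]
  field_simp
  ring

theorem B₂_resonant_numerator_eq_zero (hω : ω ≠ 0) :
    2 * ω * sin (2 * φ) * sin (2 * π * (2 * ω) / ω) -
      4 * ω * cos (2 * φ) * sin (π * (2 * ω) / ω) ^ 2 = 0 := by
  rw [two_pi_mul_div_at_resonance ω hω, pi_mul_div_at_resonance ω hω, sin_periodic.nat_mul_eq,
    sin_zero, sin_two_pi]
  ring

theorem tendsto_B₁_regular_part (hω : 0 < ω) :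
    Tendsto (fun Ω => -(8 * ω * cos (4 * φ) / (16 * ω ^ 2 - Ω ^ 2)) +
        2 * cos (2 * (π * Ω / ω + φ)) / (2 * ω + Ω) +
        cos (2 * π * Ω / ω + 4 * φ) / (4 * ω + Ω) +
        cos (4 * φ - 2 * π * Ω / ω) / (4 * ω - Ω))
      (𝓝 (2 * ω)) (𝓝 (cos (2 * φ) / (2 * ω))) := by
  refine (ContinuousAt.tendsto (by fun_prop (disch := nlinarith))).mono_right
    (le_of_eq (congrArg 𝓝 ?_))
  rw [two_pi_mul_div_at_resonance ω hω.ne', pi_mul_div_at_resonance ω hω.ne',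
    show 2 * (2 * π + φ) = 2 * φ + (2 : ℕ) * (2 * π) by push_cast; ring, add_comm _ (4 * φ),
    cos_add_nat_mul_two_pi, cos_add_nat_mul_two_pi, cos_sub_nat_mul_two_pi]
  field_simp
  ring
end

/-- Removable singularity at the resonance `Ω = 2ω`:  the parametric-forcing contribution
`B₁(Ω) + B₂(Ω)` to the averaged phase equation tends, as `Ω → 2ω` through `Ω ≠ 2ω`, to
`−(1/8) γ ε sin(2φ)(a r² + 2b)`. -/
theorem stmt_16 (a b γ r ε φ ω : ℝ) (hω : 0 < ω) :
    Tendsto (fun Ω : ℝ =>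
        a * γ * r ^ 2 * ω * ε / (32 * π) *
          (-8 * ω * Real.cos (2 * φ) / (4 * ω ^ 2 - Ω ^ 2) -
            8 * ω * Real.cos (4 * φ) / (16 * ω ^ 2 - Ω ^ 2) +
            2 * Real.cos (2 * (π * Ω / ω + φ)) / (2 * ω + Ω) +
            Real.cos (2 * π * Ω / ω + 4 * φ) / (4 * ω + Ω) +
            2 * Real.cos (2 * φ - 2 * π * Ω / ω) / (2 * ω - Ω) +
            Real.cos (4 * φ - 2 * π * Ω / ω) / (4 * ω - Ω)) +
        b * γ * ω * ε / (2 * π * (8 * ω ^ 2 - 2 * Ω ^ 2)) *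
          (Ω * Real.sin (2 * φ) * Real.sin (2 * π * Ω / ω) -
            4 * ω * Real.cos (2 * φ) * Real.sin (π * Ω / ω) ^ 2))
      (nhdsWithin (2 * ω) {(2 * ω)}ᶜ)
      (nhds (-(1 / 8) * γ * ε * Real.sin (2 * φ) * (a * r ^ 2 + 2 * b))) := by
  have hB₁ := (tendsto_B₁_regular_part φ ω hω |>.mono_left nhdsWithin_le_nhds).add
    (tendsto_div_sub_mul_of_hasDerivAt (k := fun Ω => 2 * ω + Ω)
      (hasDerivAt_B₁_resonant_numerator φ ω hω.ne') (B₁_resonant_numerator_eq_zero φ ω hω.ne')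
      (by fun_prop) (by positivity))
  have hB₂ := tendsto_div_sub_mul_of_hasDerivAt (k := fun Ω => 4 * π * (2 * ω + Ω))
      (hasDerivAt_B₂_resonant_numerator φ ω hω.ne') (B₂_resonant_numerator_eq_zero φ ω hω.ne')
      (by fun_prop) (by positivity)
  convert (hB₁.const_mul (a * γ * r ^ 2 * ω * ε / (32 * π))).add (hB₂.const_mul (b * γ * ω * ε))
    |>.congr' ?_ using 2
  · field_simp
    ring
  · filter_upwards [self_mem_nhdsWithin,
      nhdsWithin_le_nhds (Ioi_mem_nhds (by linarith : 0 < 2 * ω))] with Ω (hres : Ω ≠ 2 * ω) (hpos : 0 < Ω)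
    have h₁ : 2 * ω - Ω ≠ 0 := sub_ne_zero.mpr hres.symm
    have h₂ : 2 * ω + Ω ≠ 0 := by positivity
    rw [show 4 * ω ^ 2 - Ω ^ 2 = (2 * ω - Ω) * (2 * ω + Ω) by ring,
      show 2 * π * (8 * ω ^ 2 - 2 * Ω ^ 2) = (2 * ω - Ω) * (4 * π * (2 * ω + Ω)) by ring]
    field_simp
    ring
end
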